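/- Let V ∈ L³(0,T; L^r(ℝ³)) with 3 ≤ r ≤ 9/2 and P(·,s) satisfying ‖P(s)‖_{L^{r/2}} ≤ C‖V(s)‖²_{L^r}. Then (1/R) ∫₀^T ∫_{R<|y|<2R} |P||V| dy ds ≤ C R^{2−9/r} (∫₀^T ‖V‖³_{L^r(R<|y|<2R)} ds)^{1/3} (∫₀^T ‖V‖³_{L^r} ds)^{2/3} → 0 as R → ∞. -/

import Mathlib

open MeasureTheory Filter

noncomputable section

abbrev E3 : Type := EuclideanSpace ℝ (Fin 3)

/-- Spatial partial derivative of a scalar function on space-time. -/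
def pdx (i : Fin 3) (f : E3 × ℝ → ℝ) (p : E3 × ℝ) : ℝ :=
  fderiv ℝ f p (EuclideanSpace.single i 1, 0)

/-- Time derivative of a scalar function on space-time. -/
def pdt (f : E3 × ℝ → ℝ) (p : E3 × ℝ) : ℝ :=
  fderiv ℝ f p (0, 1)

/-- Spatial divergence. -/
def divx (V : E3 × ℝ → E3) (p : E3 × ℝ) : ℝ := ∑ i, pdx i (fun q => V q i) p

/-- Spatial curl. -/
def curlx (V : E3 × ℝ → E3) (p : E3 × ℝ) : E3 :=
  (WithLp.equiv 2 (Fin 3 → ℝ)).symm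
    ![pdx 1 (fun q => V q 2) p - pdx 2 (fun q => V q 1) p,
      pdx 2 (fun q => V q 0) p - pdx 0 (fun q => V q 2) p,
      pdx 0 (fun q => V q 1) p - pdx 1 (fun q => V q 0) p]

/-- The similarity-variable Euler system `∂ₛV + (α/(α+1))V + (1/(α+1))(y·∇)V + (V·∇)V = -∇P`,
`div V = 0`, on all of `ℝ³ × ℝ`. -/
def EulerSim (α : ℝ) (V : E3 × ℝ → E3) (P : E3 × ℝ → ℝ) : Prop :=
  (∀ (p : E3 × ℝ) (j : Fin 3),
    pdt (fun q => V q j) p + (α / (α + 1)) * V p j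
      + (1 / (α + 1)) * ∑ i, p.1 i * pdx i (fun q => V q j) p
      + ∑ i, V p i * pdx i (fun q => V q j) p
      = - pdx j P p)
  ∧ ∀ p, divx V p = 0

/-- The incompressible Euler equations `∂ₜv + (v·∇)v = -∇p`, `div v = 0`, on `ℝ³ × I`. -/
def EulerOn (v : E3 × ℝ → E3) (pr : E3 × ℝ → ℝ) (I : Set ℝ) : Prop :=
  ∀ p : E3 × ℝ, p.2 ∈ I →
    ((∀ j : Fin 3,
        pdt (fun q => v q j) p + ∑ i, v p i * pdx i (fun q => v q j) p = - pdx j pr p)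
      ∧ divx v p = 0)

/-!
At a fixed time `s`, Hölder's inequality on the annulus `A_R = {R < |y| < 2R}` with the exponents
`r/2`, `r` and the one left over for the measure of `A_R` gives
`∫_{A_R} |P||V| ≤ ‖P(s)‖_{r/2} ‖V(s)‖_{L^r(A_R)} |A_R|^{1-3/r}
  ≤ C ‖V(s)‖_r² ‖V(s)‖_{L^r(A_R)} |A_R|^{1-3/r}`,
and Hölder in time with exponents `3` and `3/2` integrates this; `|A_R|^{1-3/r} ≲ R^{3-9/r}`
produces the power of `R`. For `r ≤ 9/2` that power is at most `1` once `R ≥ 1`, while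
`∫₀^T ‖V(s)‖³_{L^r(A_R)} ds → 0` by dominated convergence, each `‖V(s)‖_{L^r(A_R)}` being
an `L^r`-tail of a function in `L^r`.
-/

open scoped ENNReal Topology

section Holder

variable {X : Type*} [MeasurableSpace X] {μ : Measure X}
  {G : Type*} [NormedAddCommGroup G] [NormedSpace ℝ G]

lemma holderTriple_ofReal_div_two_div_three {r : ℝ} (hr : 0 < r) :
    ENNReal.HolderTriple (ENNReal.ofReal (r / 2)) (ENNReal.ofReal r) (ENNReal.ofReal (r / 3)) := by
  refine ⟨?_⟩
  rw [← ENNReal.ofReal_inv_of_pos (by positivity), ← ENNReal.ofReal_inv_of_pos hr,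
    ← ENNReal.ofReal_inv_of_pos (by positivity), ← ENNReal.ofReal_add (by positivity)
    (by positivity)]
  congr 1
  field_simp
  norm_num

theorem lintegral_enorm_mul_le_eLpNorm_mul_eLpNorm_mul_measure {r : ℝ} (hr : 3 ≤ r)
    {f : X → ℝ} {g : X → G} (hf : AEStronglyMeasurable f μ)
    (hg : AEStronglyMeasurable g μ) :
    ∫⁻ x, ‖f x‖ₑ * ‖g x‖ₑ ∂μ ≤
      eLpNorm f (ENNReal.ofReal (r / 2)) μ * eLpNorm g (ENNReal.ofReal r) μ *
        μ Set.univ ^ (1 - 3 / r) := by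
  have hr0 : 0 < r := by linarith
  have := holderTriple_ofReal_div_two_div_three hr0
  have h1 : (1 : ℝ≥0∞) ≤ ENNReal.ofReal (r / 3) := by
    rw [← ENNReal.ofReal_one]; exact ENNReal.ofReal_le_ofReal (by linarith)
  calc ∫⁻ x, ‖f x‖ₑ * ‖g x‖ₑ ∂μ = eLpNorm (f • g) 1 μ := by
        simp [eLpNorm_one_eq_lintegral_enorm, enorm_smul]
    _ ≤ eLpNorm (f • g) (ENNReal.ofReal (r / 3)) μ * μ Set.univ ^ (1 - 3 / r) := by
        convert eLpNorm_le_eLpNorm_mul_rpow_measure_univ h1 (hf.smul hg) using 3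
        rw [ENNReal.toReal_ofReal (by positivity)]
        field_simp
        simp
    _ ≤ _ := by gcongr; exact eLpNorm_smul_le_mul_eLpNorm hg hf

theorem lintegral_mul_pow_two_le {a b : X → ℝ≥0∞} (ha : AEMeasurable a μ)
    (hb : AEMeasurable b μ) :
    ∫⁻ t, a t * b t ^ 2 ∂μ ≤
      (∫⁻ t, a t ^ 3 ∂μ) ^ (1 / 3 : ℝ) * (∫⁻ t, b t ^ 3 ∂μ) ^ (2 / 3 : ℝ) := by
  have hpq : Real.HolderConjugate 3 (3 / 2) := ⟨by norm_num, by norm_num, by norm_num⟩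
  have h := ENNReal.lintegral_mul_le_Lp_mul_Lq μ hpq ha (hb.pow_const 2)
  simp only [Pi.mul_apply, ← ENNReal.rpow_natCast, ← ENNReal.rpow_mul] at h ⊢
  norm_num at h ⊢
  exact h

theorem setLIntegral_enorm_mul_le_of_eLpNorm_le {r C : ℝ} (hr : 3 ≤ r)
    {f : X → ℝ} {g : X → G}
    (hf : AEStronglyMeasurable f μ) (hg : AEStronglyMeasurable g μ)
    (hfg : eLpNorm f (ENNReal.ofReal (r / 2)) μ ≤
      ENNReal.ofReal C * eLpNorm g (ENNReal.ofReal r) μ ^ 2) (S : Set X) :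
    ∫⁻ x in S, ‖f x‖ₑ * ‖g x‖ₑ ∂μ ≤
      ENNReal.ofReal C * μ S ^ (1 - 3 / r) *
        (eLpNorm g (ENNReal.ofReal r) (μ.restrict S) * eLpNorm g (ENNReal.ofReal r) μ ^ 2) := by
  have hfS : eLpNorm f (ENNReal.ofReal (r / 2)) (μ.restrict S) ≤
      ENNReal.ofReal C * eLpNorm g (ENNReal.ofReal r) μ ^ 2 :=
    (eLpNorm_mono_measure f Measure.restrict_le_self).trans hfg
  calc ∫⁻ x in S, ‖f x‖ₑ * ‖g x‖ₑ ∂μ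
      ≤ eLpNorm f (ENNReal.ofReal (r / 2)) (μ.restrict S) *
          eLpNorm g (ENNReal.ofReal r) (μ.restrict S) * μ S ^ (1 - 3 / r) := by
        simpa using lintegral_enorm_mul_le_eLpNorm_mul_eLpNorm_mul_measure hr
          hf.restrict hg.restrict
    _ ≤ ENNReal.ofReal C * eLpNorm g (ENNReal.ofReal r) μ ^ 2 *
          eLpNorm g (ENNReal.ofReal r) (μ.restrict S) * μ S ^ (1 - 3 / r) := by
        gcongr
    _ = _ := by ring

end Holder

section Annulus

variable {E : Type*} [NormedAddCommGroup E]

def annulus (R : ℝ) : Set E := {y | R < ‖y‖ ∧ ‖y‖ < 2 * R}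

lemma annulus_subset_ball (R : ℝ) : (annulus R : Set E) ⊆ Metric.ball 0 (2 * R) :=
  fun y hy => by simpa using hy.2

theorem toReal_addHaar_annulus_rpow_le [NormedSpace ℝ E] [FiniteDimensional ℝ E]
    [MeasurableSpace E] [BorelSpace E] (μ : Measure E) [μ.IsAddHaarMeasure] {R θ : ℝ}
    (hR : 0 < R) (hθ : 0 ≤ θ) :
    (μ (annulus R)).toReal ^ θ ≤
      (2 ^ Module.finrank ℝ E * (μ (Metric.ball 0 1)).toReal) ^ θ *
        R ^ (Module.finrank ℝ E * θ) := by
  have hball : μ (Metric.ball (0 : E) (2 * R)) =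
      ENNReal.ofReal ((2 * R) ^ Module.finrank ℝ E) * μ (Metric.ball 0 1) :=
    Measure.addHaar_ball_of_pos μ 0 (by positivity)
  have hle : (μ (annulus R)).toReal ≤
      2 ^ Module.finrank ℝ E * (μ (Metric.ball 0 1)).toReal * R ^ Module.finrank ℝ E := by
    refine (ENNReal.toReal_mono ?_ (measure_mono (annulus_subset_ball R))).trans_eq ?_
    · exact measure_ball_lt_top.ne
    · rw [hball, ENNReal.toReal_mul, ENNReal.toReal_ofReal (by positivity)]
      ring
  grw [hle]
  rw [Real.mul_rpow (by positivity) (by positivity), ← Real.rpow_natCast R,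
    ← Real.rpow_mul hR.le]

variable [MeasurableSpace E] [OpensMeasurableSpace E] {μ : Measure E}

lemma measurableSet_annulus (R : ℝ) : MeasurableSet (annulus R : Set E) :=
  (measurableSet_lt measurable_const measurable_norm).inter
    (measurableSet_lt measurable_norm measurable_const)

theorem tendsto_setLIntegral_annulus_zero {f : E → ℝ≥0∞} (hf : AEMeasurable f μ)
    (hfin : ∫⁻ y, f y ∂μ ≠ ∞) :
    Tendsto (fun R => ∫⁻ y in annulus R, f y ∂μ) atTop (𝓝 0) := by
  simp_rw [← lintegral_indicator (measurableSet_annulus _)]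
  have hlim : ∀ y, Tendsto (fun R => (annulus R).indicator f y) atTop (𝓝 0) := fun y =>
    tendsto_const_nhds.congr' <| (eventually_ge_atTop ‖y‖).mono fun R hR =>
      (Set.indicator_of_notMem (fun hy => hR.not_gt hy.1) f).symm
  simpa using tendsto_lintegral_filter_of_dominated_convergence' f
    (.of_forall fun R => hf.indicator (measurableSet_annulus R))
    (.of_forall fun R => .of_forall fun y => Set.indicator_le_self _ f y) hfin (.of_forall hlim)

theorem tendsto_eLpNorm_restrict_annulus_zero {G : Type*} [NormedAddCommGroup G] {g : E → G}
    {p : ℝ≥0∞} (hp0 : p ≠ 0) (hp : p ≠ ∞) (hg : AEStronglyMeasurable g μ)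
    (hfin : eLpNorm g p μ ≠ ∞) :
    Tendsto (fun R => eLpNorm g p (μ.restrict (annulus R))) atTop (𝓝 0) := by
  have hp' : 0 < p.toReal := ENNReal.toReal_pos hp0 hp
  simp_rw [eLpNorm_eq_lintegral_rpow_enorm_toReal hp0 hp] at hfin ⊢
  have hint : ∫⁻ y, ‖g y‖ₑ ^ p.toReal ∂μ ≠ ∞ := by
    simpa [ENNReal.rpow_eq_top_iff, hp'] using hfin
  have h := ((ENNReal.continuous_rpow_const (y := 1 / p.toReal)).tendsto 0).comp
    (tendsto_setLIntegral_annulus_zero (hg.enorm.pow_const _) hint)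
  rwa [ENNReal.zero_rpow_of_pos (one_div_pos.mpr hp')] at h

end Annulus

section SpaceTime

variable {X Y : Type*} [MeasurableSpace X] [MeasurableSpace Y] {μ : Measure X} {ν : Measure Y}
  {G : Type*} [NormedAddCommGroup G]

lemma lintegral_eLpNorm_restrict_pow_le (U : X × Y → G) (p : ℝ≥0∞) (n : ℕ) (S : Set X) :
    ∫⁻ y, eLpNorm (fun x => U (x, y)) p (μ.restrict S) ^ n ∂ν ≤
      ∫⁻ y, eLpNorm (fun x => U (x, y)) p μ ^ n ∂ν :=
  lintegral_mono fun _ => pow_le_pow_left' (eLpNorm_mono_measure _ Measure.restrict_le_self) n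

theorem MeasureTheory.StronglyMeasurable.eLpNorm_prod_left [SFinite μ] {U : X × Y → G}
    (hU : StronglyMeasurable U) {p : ℝ≥0∞} (hp : p ≠ ∞) :
    Measurable fun y => eLpNorm (fun x => U (x, y)) p μ := by
  rcases eq_or_ne p 0 with rfl | hp0
  · simp
  simp_rw [eLpNorm_eq_lintegral_rpow_enorm_toReal hp0 hp]
  exact ((hU.enorm.pow_const _).lintegral_prod_left').pow_const _

theorem lintegral_setLIntegral_enorm_mul_le [NormedSpace ℝ G] [SFinite μ] {r C : ℝ}
    (hr : 3 ≤ r)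
    {F : X × Y → ℝ} {U : X × Y → G} (hF : StronglyMeasurable F) (hU : StronglyMeasurable U)
    (hFU : ∀ y, eLpNorm (fun x => F (x, y)) (ENNReal.ofReal (r / 2)) μ ≤
      ENNReal.ofReal C * eLpNorm (fun x => U (x, y)) (ENNReal.ofReal r) μ ^ 2) (S : Set X) :
    ∫⁻ y, ∫⁻ x in S, ‖F (x, y)‖ₑ * ‖U (x, y)‖ₑ ∂μ ∂ν ≤
      ENNReal.ofReal C * μ S ^ (1 - 3 / r) *
        ((∫⁻ y, eLpNorm (fun x => U (x, y)) (ENNReal.ofReal r) (μ.restrict S) ^ 3 ∂ν) ^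
            (1 / 3 : ℝ) *
          (∫⁻ y, eLpNorm (fun x => U (x, y)) (ENNReal.ofReal r) μ ^ 3 ∂ν) ^ (2 / 3 : ℝ)) := by
  have hUS := hU.eLpNorm_prod_left (μ := μ.restrict S) (p := ENNReal.ofReal r)
    ENNReal.ofReal_ne_top
  have hUμ := hU.eLpNorm_prod_left (μ := μ) (p := ENNReal.ofReal r) ENNReal.ofReal_ne_top
  calc ∫⁻ y, ∫⁻ x in S, ‖F (x, y)‖ₑ * ‖U (x, y)‖ₑ ∂μ ∂ν
      ≤ ∫⁻ y, ENNReal.ofReal C * μ S ^ (1 - 3 / r) *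
          (eLpNorm (fun x => U (x, y)) (ENNReal.ofReal r) (μ.restrict S) *
            eLpNorm (fun x => U (x, y)) (ENNReal.ofReal r) μ ^ 2) ∂ν :=
        lintegral_mono fun y => setLIntegral_enorm_mul_le_of_eLpNorm_le hr
          (hF.comp_measurable measurable_prodMk_right).aestronglyMeasurable
          (hU.comp_measurable measurable_prodMk_right).aestronglyMeasurable (hFU y) S
    _ = ENNReal.ofReal C * μ S ^ (1 - 3 / r) *
          ∫⁻ y, eLpNorm (fun x => U (x, y)) (ENNReal.ofReal r) (μ.restrict S) *
            eLpNorm (fun x => U (x, y)) (ENNReal.ofReal r) μ ^ 2 ∂ν :=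
        lintegral_const_mul _ (hUS.mul (hUμ.pow_const 2))
    _ ≤ _ := by
        gcongr
        exact lintegral_mul_pow_two_le hUS.aemeasurable hUμ.aemeasurable

theorem integral_norm_rpow_rpow_eq_toReal_eLpNorm_pow {g : X → G}
    (hg : AEStronglyMeasurable g μ) {r : ℝ} (hr : 0 < r) :
    (∫ x, ‖g x‖ ^ r ∂μ) ^ (3 / r) = (eLpNorm g (ENNReal.ofReal r) μ ^ 3).toReal := by
  rw [eLpNorm_eq_lintegral_rpow_enorm_toReal (by simpa using hr) ENNReal.ofReal_ne_top,
    ENNReal.toReal_ofReal hr.le, ← ENNReal.rpow_natCast, ← ENNReal.rpow_mul,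
    ← ENNReal.toReal_rpow, integral_eq_lintegral_of_nonneg_ae (.of_forall fun x => by positivity)
      (hg.norm.aemeasurable.pow_const r).aestronglyMeasurable]
  congr 2
  · refine lintegral_congr fun x => ?_
    rw [← ENNReal.ofReal_rpow_of_nonneg (norm_nonneg _) hr.le, ofReal_norm]
  · push_cast; ring

theorem integral_abs_mul_norm_eq_toReal_lintegral [NormedSpace ℝ G] {f : X → ℝ} {g : X → G}
    (hf : AEStronglyMeasurable f μ) (hg : AEStronglyMeasurable g μ) :
    ∫ x, |f x| * ‖g x‖ ∂μ = (∫⁻ x, ‖f x‖ₑ * ‖g x‖ₑ ∂μ).toReal := by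
  simpa [norm_smul, enorm_smul] using integral_norm_eq_lintegral_enorm (hf.smul hg)

theorem integral_integral_rpow_eq_toReal_lintegral_eLpNorm_pow [SFinite μ] {U : X × Y → G}
    (hU : StronglyMeasurable U) {r : ℝ} (hr : 0 < r)
    (hfin : ∫⁻ y, eLpNorm (fun x => U (x, y)) (ENNReal.ofReal r) μ ^ 3 ∂ν ≠ ∞) :
    ∫ y, (∫ x, ‖U (x, y)‖ ^ r ∂μ) ^ (3 / r) ∂ν =
      (∫⁻ y, eLpNorm (fun x => U (x, y)) (ENNReal.ofReal r) μ ^ 3 ∂ν).toReal := by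
  have hmeas : AEMeasurable (fun y => eLpNorm (fun x => U (x, y)) (ENNReal.ofReal r) μ ^ 3) ν :=
    ((hU.eLpNorm_prod_left ENNReal.ofReal_ne_top).pow_const 3).aemeasurable
  have hsection y := integral_norm_rpow_rpow_eq_toReal_eLpNorm_pow (μ := μ)
    (g := fun x => U (x, y))
    (hU.comp_measurable measurable_prodMk_right).aestronglyMeasurable hr
  simp_rw [hsection]
  exact integral_toReal hmeas (ae_lt_top' hmeas hfin)

theorem integral_integral_abs_mul_norm_eq_toReal_lintegral [NormedSpace ℝ G] [SFinite μ]
    {F : X × Y → ℝ} {U : X × Y → G} (hF : StronglyMeasurable F) (hU : StronglyMeasurable U)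
    (hfin : ∫⁻ y, ∫⁻ x, ‖F (x, y)‖ₑ * ‖U (x, y)‖ₑ ∂μ ∂ν ≠ ∞) :
    ∫ y, ∫ x, |F (x, y)| * ‖U (x, y)‖ ∂μ ∂ν =
      (∫⁻ y, ∫⁻ x, ‖F (x, y)‖ₑ * ‖U (x, y)‖ₑ ∂μ ∂ν).toReal := by
  have hmeas : AEMeasurable (fun y => ∫⁻ x, ‖F (x, y)‖ₑ * ‖U (x, y)‖ₑ ∂μ) ν :=
    (hF.enorm.mul hU.enorm).lintegral_prod_left'.aemeasurable
  have hsection y := integral_abs_mul_norm_eq_toReal_lintegral (μ := μ)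
    (f := fun x => F (x, y)) (g := fun x => U (x, y))
    (hF.comp_measurable measurable_prodMk_right).aestronglyMeasurable
    (hU.comp_measurable measurable_prodMk_right).aestronglyMeasurable
  simp_rw [hsection]
  exact integral_toReal hmeas (ae_lt_top' hmeas hfin)

theorem tendsto_lintegral_eLpNorm_restrict_annulus_pow_zero {E : Type*} [NormedAddCommGroup E]
    [MeasurableSpace E] [OpensMeasurableSpace E] {μ : Measure E} [SFinite μ] {U : E × Y → G}
    (hU : StronglyMeasurable U) {p : ℝ≥0∞} (hp0 : p ≠ 0) (hp : p ≠ ∞) {n : ℕ}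
    (hn : n ≠ 0)
    (hfin : ∫⁻ y, eLpNorm (fun x => U (x, y)) p μ ^ n ∂ν ≠ ∞) :
    Tendsto (fun R => ∫⁻ y, eLpNorm (fun x => U (x, y)) p (μ.restrict (annulus R)) ^ n ∂ν)
      atTop (𝓝 0) := by
  have hmeas := (hU.eLpNorm_prod_left (μ := μ) hp).pow_const n
  have hlim : ∀ᵐ y ∂ν, Tendsto
      (fun R => eLpNorm (fun x => U (x, y)) p (μ.restrict (annulus R)) ^ n) atTop (𝓝 0) := by
    filter_upwards [ae_lt_top hmeas hfin] with y hy
    have hy' : eLpNorm (fun x => U (x, y)) p μ ≠ ∞ := by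
      simpa [ENNReal.pow_eq_top_iff, hn] using hy.ne
    simpa [Function.comp_def, zero_pow hn] using ((ENNReal.continuous_pow n).tendsto 0).comp
      (tendsto_eLpNorm_restrict_annulus_zero (g := fun x => U (x, y)) hp0 hp
        (hU.comp_measurable measurable_prodMk_right).aestronglyMeasurable hy')
  simpa using tendsto_lintegral_filter_of_dominated_convergence _
    (.of_forall fun R => (hU.eLpNorm_prod_left hp).pow_const n)
    (.of_forall fun R => .of_forall fun y =>
      pow_le_pow_left' (eLpNorm_mono_measure _ Measure.restrict_le_self) n)
    hfin hlim

end SpaceTime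

section Flux

variable {T r Ccz : ℝ} {V : E3 × ℝ → E3} {P : E3 × ℝ → ℝ}

theorem pressure_flux_annulus_le (hr : 3 ≤ r) (hCcz : 0 ≤ Ccz) (hVm : Measurable V)
    (hPm : Measurable P)
    (hL : (∫⁻ s in Set.Ioo (0 : ℝ) T,
        (eLpNorm (fun y => V (y, s)) (ENNReal.ofReal r) (volume : Measure E3)) ^ (3 : ℕ)) < ⊤)
    (hcz : ∀ s : ℝ,
      eLpNorm (fun y => P (y, s)) (ENNReal.ofReal (r / 2)) (volume : Measure E3) ≤
        ENNReal.ofReal Ccz *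
          (eLpNorm (fun y => V (y, s)) (ENNReal.ofReal r) (volume : Measure E3)) ^ 2)
    {R : ℝ} (hR : 0 < R) :
    (1 / R) * (∫ s in Set.Ioo (0 : ℝ) T, ∫ y in annulus R, |P (y, s)| * ‖V (y, s)‖) ≤
      Ccz * (2 ^ 3 * (volume (Metric.ball (0 : E3) 1)).toReal) ^ (1 - 3 / r) * R ^ (2 - 9 / r) *
        (∫ s in Set.Ioo (0 : ℝ) T, (∫ y in annulus R, ‖V (y, s)‖ ^ r) ^ (3 / r)) ^
          ((1 : ℝ) / 3) *
        (∫ s in Set.Ioo (0 : ℝ) T, (∫ y : E3, ‖V (y, s)‖ ^ r) ^ (3 / r)) ^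
          ((2 : ℝ) / 3) := by
  have hr0 : 0 < r := by linarith
  have hθ : 0 ≤ 1 - 3 / r := by rw [sub_nonneg, div_le_one hr0]; exact hr
  have hV := hVm.stronglyMeasurable
  have hA : ∫⁻ s in Set.Ioo 0 T, eLpNorm (fun y => V (y, s)) (ENNReal.ofReal r)
      (volume.restrict (annulus R)) ^ 3 ≠ ∞ :=
    ((lintegral_eLpNorm_restrict_pow_le V _ 3 (annulus R)).trans_lt hL).ne
  have hbound := lintegral_setLIntegral_enorm_mul_le (ν := volume.restrict (Set.Ioo 0 T)) hr
    hPm.stronglyMeasurable hV hcz (annulus R)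
  have hvol : volume (annulus R : Set E3) ≠ ∞ :=
    (measure_mono (annulus_subset_ball R)).trans_lt measure_ball_lt_top |>.ne
  have hfin :
      ∫⁻ s in Set.Ioo 0 T, ∫⁻ y in annulus R, ‖P (y, s)‖ₑ * ‖V (y, s)‖ₑ ≠ ∞ :=
    (hbound.trans_lt (by finiteness)).ne
  rw [integral_integral_abs_mul_norm_eq_toReal_lintegral hPm.stronglyMeasurable hV hfin,
    integral_integral_rpow_eq_toReal_lintegral_eLpNorm_pow hV hr0 hA,
    integral_integral_rpow_eq_toReal_lintegral_eLpNorm_pow hV hr0 hL.ne]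
  have hannulus := toReal_addHaar_annulus_rpow_le (volume : Measure E3) hR hθ
  rw [finrank_euclideanSpace_fin] at hannulus
  calc _ ≤ (1 / R) * (Ccz * (volume (annulus R : Set E3)).toReal ^ (1 - 3 / r) *
        ((∫⁻ s in Set.Ioo 0 T, eLpNorm (fun y => V (y, s)) (ENNReal.ofReal r)
          (volume.restrict (annulus R)) ^ 3).toReal ^ (1 / 3 : ℝ) *
        (∫⁻ s in Set.Ioo 0 T, eLpNorm (fun y => V (y, s)) (ENNReal.ofReal r)
          volume ^ 3).toReal ^ (2 / 3 : ℝ))) := by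
        gcongr
        refine (ENNReal.toReal_mono (by finiteness) hbound).trans_eq ?_
        simp [ENNReal.toReal_mul, ← ENNReal.toReal_rpow, hCcz]
    _ ≤ _ := by
        grw [hannulus]
        rw [show ((3 : ℕ) : ℝ) * (1 - 3 / r) = 1 + (2 - 9 / r) by push_cast; ring,
          Real.rpow_add hR, Real.rpow_one]
        field_simp
        exact le_rfl

theorem tendsto_integral_annulus_rpow_zero (hr : 0 < r) (hVm : Measurable V)
    (hL : (∫⁻ s in Set.Ioo (0 : ℝ) T,
        (eLpNorm (fun y => V (y, s)) (ENNReal.ofReal r) (volume : Measure E3)) ^ (3 : ℕ)) < ⊤) :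
    Tendsto (fun R => (∫ s in Set.Ioo (0 : ℝ) T,
      (∫ y in annulus R, ‖V (y, s)‖ ^ r) ^ (3 / r)) ^ ((1 : ℝ) / 3)) atTop (𝓝 0) := by
  have hV := hVm.stronglyMeasurable
  have hA (R : ℝ) : ∫⁻ s in Set.Ioo 0 T, eLpNorm (fun y => V (y, s)) (ENNReal.ofReal r)
      (volume.restrict (annulus R)) ^ 3 ≠ ∞ :=
    ((lintegral_eLpNorm_restrict_pow_le V _ 3 (annulus R)).trans_lt hL).ne
  simp_rw [integral_integral_rpow_eq_toReal_lintegral_eLpNorm_pow hV hr (hA _)]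
  have h := tendsto_lintegral_eLpNorm_restrict_annulus_pow_zero
    (ν := volume.restrict (Set.Ioo 0 T)) hV (by simpa using hr) ENNReal.ofReal_ne_top
    three_ne_zero hL.ne
  have h' := (Real.continuousAt_rpow_const 0 (1 / 3) (Or.inr (by norm_num))).tendsto.comp
    ((ENNReal.tendsto_toReal ENNReal.zero_ne_top).comp h)
  simpa [Function.comp_def] using h'

end Flux

theorem stmt15_general (T r Ccz : ℝ) (hr : 3 ≤ r) (hr' : r ≤ 9 / 2) (hCcz : 0 < Ccz)
    (V : E3 × ℝ → E3) (P : E3 × ℝ → ℝ) (hVm : Measurable V) (hPm : Measurable P)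
    (hL : (∫⁻ s in Set.Ioo (0 : ℝ) T,
        (eLpNorm (fun y => V (y, s)) (ENNReal.ofReal r) (volume : Measure E3)) ^ (3 : ℕ)) < ⊤)
    (hcz : ∀ s : ℝ,
      eLpNorm (fun y => P (y, s)) (ENNReal.ofReal (r / 2)) (volume : Measure E3) ≤
        ENNReal.ofReal Ccz *
          (eLpNorm (fun y => V (y, s)) (ENNReal.ofReal r) (volume : Measure E3)) ^ 2) :
    (∃ C : ℝ, 0 < C ∧ ∀ R : ℝ, 0 < R →
      (1 / R) * (∫ s in Set.Ioo (0 : ℝ) T,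
          ∫ y in {y : E3 | R < ‖y‖ ∧ ‖y‖ < 2 * R}, |P (y, s)| * ‖V (y, s)‖)
        ≤ C * R ^ (2 - 9 / r) *
          ((∫ s in Set.Ioo (0 : ℝ) T,
              (∫ y in {y : E3 | R < ‖y‖ ∧ ‖y‖ < 2 * R}, ‖V (y, s)‖ ^ r) ^ (3 / r)) ^ ((1 : ℝ) / 3)) *
          ((∫ s in Set.Ioo (0 : ℝ) T,
              (∫ y : E3, ‖V (y, s)‖ ^ r) ^ (3 / r)) ^ ((2 : ℝ) / 3)))
    ∧ Filter.Tendsto (fun R : ℝ =>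
        (1 / R) * ∫ s in Set.Ioo (0 : ℝ) T,
          ∫ y in {y : E3 | R < ‖y‖ ∧ ‖y‖ < 2 * R}, |P (y, s)| * ‖V (y, s)‖)
        Filter.atTop (nhds 0) := by
  have hr0 : 0 < r := by linarith
  have hball : 0 < (volume (Metric.ball (0 : E3) 1)).toReal :=
    ENNReal.toReal_pos (Metric.measure_ball_pos volume 0 one_pos).ne' measure_ball_lt_top.ne
  set C := Ccz * (2 ^ 3 * (volume (Metric.ball (0 : E3) 1)).toReal) ^ (1 - 3 / r)
  have hC : 0 < C := by positivity
  have hflux (R : ℝ) (hR : 0 < R) := pressure_flux_annulus_le hr hCcz.le hVm hPm hL hcz hR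
  refine ⟨⟨C, hC, hflux⟩, ?_⟩
  have hsmall := ((tendsto_integral_annulus_rpow_zero hr0 hVm hL).const_mul C).mul_const
    ((∫ s in Set.Ioo (0 : ℝ) T, (∫ y : E3, ‖V (y, s)‖ ^ r) ^ (3 / r)) ^ ((2 : ℝ) / 3))
  rw [mul_zero, zero_mul] at hsmall
  refine squeeze_zero' ((eventually_gt_atTop 0).mono fun R hR => by positivity) ?_ hsmall
  filter_upwards [eventually_ge_atTop 1] with R hR
  have hpow : R ^ (2 - 9 / r) ≤ 1 := Real.rpow_le_one_of_one_le_of_nonpos hR <| by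
    rw [sub_nonpos, le_div_iff₀ hr0]; linarith
  refine (hflux R (by linarith)).trans ?_
  conv_rhs => rw [← mul_one C]
  gcongr

/-- Hölder estimate on annuli for the pressure term: with the Calderón–Zygmund bound
`‖P(s)‖_{L^{r/2}} ≤ C‖V(s)‖²_{L^r}`, the flux term `(1/R)∫₀^T∫_{R<|y|<2R} |P||V|` is bounded by
`C R^{2-9/r} (∫₀^T ‖V‖³_{L^r(ann)})^{1/3} (∫₀^T ‖V‖³_{L^r})^{2/3}` and tends to `0`. -/
theorem stmt15 (T r Ccz : ℝ) (hT : 0 < T) (hr : 3 ≤ r) (hr' : r ≤ 9 / 2) (hCcz : 0 < Ccz)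
    (V : E3 × ℝ → E3) (P : E3 × ℝ → ℝ) (hVm : Measurable V) (hPm : Measurable P)
    (hL : (∫⁻ s in Set.Ioo (0 : ℝ) T,
        (eLpNorm (fun y => V (y, s)) (ENNReal.ofReal r) (volume : Measure E3)) ^ (3 : ℕ)) < ⊤)
    (hcz : ∀ s : ℝ,
      eLpNorm (fun y => P (y, s)) (ENNReal.ofReal (r / 2)) (volume : Measure E3) ≤
        ENNReal.ofReal Ccz *
          (eLpNorm (fun y => V (y, s)) (ENNReal.ofReal r) (volume : Measure E3)) ^ 2) :
    (∃ C : ℝ, 0 < C ∧ ∀ R : ℝ, 0 < R →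
      (1 / R) * (∫ s in Set.Ioo (0 : ℝ) T,
          ∫ y in {y : E3 | R < ‖y‖ ∧ ‖y‖ < 2 * R}, |P (y, s)| * ‖V (y, s)‖)
        ≤ C * R ^ (2 - 9 / r) *
          ((∫ s in Set.Ioo (0 : ℝ) T,
              (∫ y in {y : E3 | R < ‖y‖ ∧ ‖y‖ < 2 * R}, ‖V (y, s)‖ ^ r) ^ (3 / r)) ^ ((1 : ℝ) / 3)) *
          ((∫ s in Set.Ioo (0 : ℝ) T,
              (∫ y : E3, ‖V (y, s)‖ ^ r) ^ (3 / r)) ^ ((2 : ℝ) / 3)))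
    ∧ Filter.Tendsto (fun R : ℝ =>
        (1 / R) * ∫ s in Set.Ioo (0 : ℝ) T,
          ∫ y in {y : E3 | R < ‖y‖ ∧ ‖y‖ < 2 * R}, |P (y, s)| * ‖V (y, s)‖)
        Filter.atTop (nhds 0) :=
  stmt15_general T r Ccz hr hr' hCcz V P hVm hPm hL hcz

end
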